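/- For u(z) = α/(1−pz) with |p| < 1, the function u(t,z) = e^{−iωt} u₀(e^{−ict} z) with ω = |α|²/(1−|p|²)² and c = |α|²/(1−|p|²) is an exact solution of the cubic Szegő equation i∂_t u = Π(|u|²u). -/

import Mathlib

/-!
Write `z` for the point of the unit circle. At time `t` the wave is `u = β (1 - q z)⁻¹` with
`β = α e^{-iωt}` and `q = p e^{-ict}`, so its Fourier coefficients are `β qᵏ` for `k ≥ 0` and vanish
for `k < 0`. Since `z̄ = z⁻¹`, `|u|²u = |β|²β ((1 - qz)²(1 - q̄ z⁻¹))⁻¹`, and a partial-fraction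
decomposition in `w = qz`, `v = q̄ z⁻¹` (with `wv = |q|² = |p|² =: r`) expands it into a Laurent
series whose `k`-th coefficient, `k ≥ 0`, is `|α|² (r/(1-r)² + (k+1)/(1-r))` times that of `u`.
For the given `ω` and `c` this factor is `ω + ck`, exactly the frequency of the mode
`α pᵏ e^{-i(ω+ck)t}`.
-/

noncomputable section

open MeasureTheory Real AddCircle

instance : Fact (0 < 2 * π) := ⟨by positivity⟩

/-- The point of the unit circle in `ℂ` corresponding to `x ∈ ℝ/2πℤ`. -/
def circlePt (x : AddCircle (2 * π)) : ℂ := (AddCircle.toCircle x : ℂ)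

/-- The traveling wave `u(t,z) = e^{−iωt} u₀(e^{−ict}z)` with `u₀(z) = α/(1−pz)`. -/
def travWave (α p : ℂ) (ω c : ℝ) (t : ℝ) : AddCircle (2 * π) → ℂ :=
  fun x => Complex.exp (-Complex.I * ω * t) *
    (α / (1 - p * circlePt (x - ((c * t : ℝ) : AddCircle (2 * π)))))

theorem Int.rec_natCast {α : Type*} (a b : ℕ → α) (k : ℕ) :
    Int.rec (motive := fun _ => α) a b (k : ℤ) = a k :=
  rfl

theorem coe_fourier_apply_eq_zpow {T : ℝ} (n : ℤ) (x : AddCircle T) :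
    (fourier n x : ℂ) = (toCircle x : ℂ) ^ n := by
  rw [fourier_apply, toCircle_zsmul, Circle.coe_zpow]

theorem sq_norm_mul_self_eq_of_norm_eq_one (β q : ℂ) {z : ℂ} (hz : ‖z‖ = 1) :
    (‖β * (1 - q * z)⁻¹‖ ^ 2 : ℂ) * (β * (1 - q * z)⁻¹)
      = ‖β‖ ^ 2 * β * ((1 - q * z) ^ 2 * (1 - starRingEnd ℂ q * z⁻¹))⁻¹ := by
  rw [← Complex.mul_conj', ← Complex.mul_conj', map_mul, map_inv₀, map_sub, map_one, map_mul,
    ← Complex.inv_eq_conj hz, mul_inv, ← inv_pow]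
  ring

section FourierSeries

variable {T : ℝ} [Fact (0 < T)]

theorem fourierCoeff_tsum_mul_fourier {c : ℤ → ℂ} (hc : Summable c) :
    fourierCoeff (fun x : AddCircle T => ∑' m, c m * fourier m x) = c := by
  ext n
  set F : ℤ → AddCircle T → ℂ := fun m x => fourier (-n) x • (c m * fourier m x)
  have hF_int (m : ℤ) : Integrable (F m) haarAddCircle :=
    ((map_continuous (fourier m)).integrable_of_hasCompactSupport
      (HasCompactSupport.of_compactSpace _) |>.const_mul (c m)).fourier_smul (-n)
  have hF_norm (m : ℤ) : ∫ x, ‖F m x‖ ∂haarAddCircle = ‖c m‖ := by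
    simp [F, Circle.norm_coe]
  calc fourierCoeff (fun x : AddCircle T => ∑' m, c m * fourier m x) n
      = ∫ x, ∑' m, F m x ∂haarAddCircle := by
        simp_rw [fourierCoeff, F, tsum_const_smul'']
    _ = ∑' m, c m * (Pi.single m 1 : ℤ → ℂ) n := by
        rw [← integral_tsum_of_summable_integral_norm hF_int (by simpa [hF_norm] using hc.norm)]
        congr 1 with m
        exact (fourierCoeff.const_mul _ (c m) n).trans (by rw [fourierCoeff_fourier])
    _ = c n := by simp [Pi.single_apply]

theorem fourierCoeff_eq_int_rec {a b : ℕ → ℂ} (ha : Summable a) (hb : Summable b)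
    {f : AddCircle T → ℂ}
    (hf : ∀ x, f x = ∑' k, a k * (toCircle x : ℂ) ^ k
      + ∑' k, b k * ((toCircle x : ℂ) ^ (k + 1))⁻¹) :
    fourierCoeff f = Int.rec a b := by
  suffices f = fun x => ∑' m, Int.rec a b m * fourier m x by
    rw [this]; exact fourierCoeff_tsum_mul_fourier (ha.int_rec hb)
  ext x
  have hz : ‖(toCircle x : ℂ)‖ = 1 := Circle.norm_coe _
  have ha' : Summable fun k => a k * (toCircle x : ℂ) ^ k :=
    .of_norm (by simpa [hz] using ha.norm)
  have hb' : Summable fun k => b k * ((toCircle x : ℂ) ^ (k + 1))⁻¹ :=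
    .of_norm (by simpa [hz] using hb.norm)
  rw [hf x, ← (ha'.hasSum.int_rec hb'.hasSum).tsum_eq]
  congr 1 with (k | k) <;> simp only [coe_fourier_apply_eq_zpow] <;> simp [zpow_negSucc]

theorem fourierCoeff_inv_one_sub_mul_toCircle {q : ℂ} (hq : ‖q‖ < 1) :
    fourierCoeff (fun x : AddCircle T => (1 - q * toCircle x)⁻¹) = Int.rec (q ^ ·) 0 := by
  refine fourierCoeff_eq_int_rec (summable_geometric_of_norm_lt_one hq) summable_zero fun x => ?_
  have hqz : ‖q * toCircle x‖ < 1 := by simpa [Circle.norm_coe] using hq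
  simp [← mul_pow, tsum_geometric_of_norm_lt_one hqz]

theorem hasSum_add_one_mul_geometric_of_norm_lt_one {𝕜 : Type*} [NormedDivisionRing 𝕜] {w : 𝕜}
    (hw : ‖w‖ < 1) : HasSum (fun n : ℕ => ((n : 𝕜) + 1) * w ^ n) ((1 - w) ^ 2)⁻¹ := by
  simpa using hasSum_choose_mul_geometric_of_norm_lt_one 1 hw

theorem inv_one_sub_sq_mul_one_sub {K : Type*} [Field K] {w v : K} (hw : 1 - w ≠ 0)
    (hv : 1 - v ≠ 0) (hwv : 1 - w * v ≠ 0) :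
    ((1 - w) ^ 2 * (1 - v))⁻¹ = w * v / (1 - w * v) ^ 2 * (1 - w)⁻¹
      + 1 / (1 - w * v) * ((1 - w) ^ 2)⁻¹ + v / (1 - w * v) ^ 2 * (1 - v)⁻¹ := by
  field_simp
  ring

theorem fourierCoeff_inv_one_sub_sq_mul_one_sub_conj {q : ℂ} (hq : ‖q‖ < 1) :
    fourierCoeff (fun x : AddCircle T =>
        ((1 - q * toCircle x) ^ 2 * (1 - starRingEnd ℂ q * (toCircle x : ℂ)⁻¹))⁻¹) =
      Int.rec
        (fun k => ((‖q‖ : ℂ) ^ 2 / (1 - (‖q‖ : ℂ) ^ 2) ^ 2 + (k + 1) / (1 - (‖q‖ : ℂ) ^ 2)) * q ^ k)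
        (fun k => starRingEnd ℂ q ^ (k + 1) / (1 - (‖q‖ : ℂ) ^ 2) ^ 2) := by
  set r : ℂ := (‖q‖ : ℂ) ^ 2 with hr_def
  have hq' : ‖starRingEnd ℂ q‖ < 1 := by rwa [RCLike.norm_conj]
  have hr : 1 - r ≠ 0 := by
    rw [sub_ne_zero, hr_def]; norm_cast; nlinarith [norm_nonneg q]
  have hpos (w : ℂ) (hw : ‖w‖ < 1) :
      HasSum (fun k : ℕ => (r / (1 - r) ^ 2 + (k + 1) / (1 - r)) * w ^ k)
        (r / (1 - r) ^ 2 * (1 - w)⁻¹ + 1 / (1 - r) * ((1 - w) ^ 2)⁻¹) := by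
    refine (((hasSum_geometric_of_norm_lt_one hw).mul_left (r / (1 - r) ^ 2)).add
      ((hasSum_add_one_mul_geometric_of_norm_lt_one hw).mul_left (1 / (1 - r)))).congr_fun
      fun k => by ring
  have hneg (v : ℂ) (hv : ‖v‖ < 1) :
      HasSum (fun k : ℕ => v ^ (k + 1) / (1 - r) ^ 2) (v / (1 - r) ^ 2 * (1 - v)⁻¹) := by
    refine ((hasSum_geometric_of_norm_lt_one hv).mul_left (v / (1 - r) ^ 2)).congr_fun
      fun k => by ring
  refine fourierCoeff_eq_int_rec (hpos q hq).summable (hneg _ hq').summable fun x => ?_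
  set z : ℂ := (toCircle x : ℂ)
  have hz : ‖z‖ = 1 := Circle.norm_coe _
  have hz0 : z ≠ 0 := Circle.coe_ne_zero _
  have hqz : ‖q * z‖ < 1 := by simpa [hz] using hq
  have hqz' : ‖starRingEnd ℂ q * z⁻¹‖ < 1 := by simpa [hz] using hq
  have hwv : q * z * (starRingEnd ℂ q * z⁻¹) = r := by
    rw [hr_def, ← Complex.mul_conj']; field_simp
  have hsum_pos : ∑' k : ℕ, (r / (1 - r) ^ 2 + (k + 1) / (1 - r)) * q ^ k * z ^ k
      = r / (1 - r) ^ 2 * (1 - q * z)⁻¹ + 1 / (1 - r) * ((1 - q * z) ^ 2)⁻¹ := by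
    rw [← (hpos _ hqz).tsum_eq]; exact tsum_congr fun k => by ring
  have hsum_neg : ∑' k : ℕ, starRingEnd ℂ q ^ (k + 1) / (1 - r) ^ 2 * (z ^ (k + 1))⁻¹
      = starRingEnd ℂ q * z⁻¹ / (1 - r) ^ 2 * (1 - starRingEnd ℂ q * z⁻¹)⁻¹ := by
    rw [← (hneg _ hqz').tsum_eq]; exact tsum_congr fun k => by ring
  rw [hsum_pos, hsum_neg, ← hwv, inv_one_sub_sq_mul_one_sub
    (isUnit_one_sub_of_norm_lt_one hqz).ne_zero (isUnit_one_sub_of_norm_lt_one hqz').ne_zero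
    (hwv ▸ hr)]

theorem fourierCoeff_sq_norm_mul_self_mul_inv_one_sub {q : ℂ} (hq : ‖q‖ < 1) (β : ℂ) (k : ℕ) :
    fourierCoeff (fun x : AddCircle T =>
        (‖β * (1 - q * toCircle x)⁻¹‖ ^ 2 : ℂ) * (β * (1 - q * toCircle x)⁻¹)) k
      = ‖β‖ ^ 2 * ((‖q‖ : ℂ) ^ 2 / (1 - (‖q‖ : ℂ) ^ 2) ^ 2 + (k + 1) / (1 - (‖q‖ : ℂ) ^ 2))
        * (β * q ^ k) := by
  simp_rw [sq_norm_mul_self_eq_of_norm_eq_one β q (Circle.norm_coe _)]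
  rw [fourierCoeff.const_mul, fourierCoeff_inv_one_sub_sq_mul_one_sub_conj hq]
  simp only [Int.rec_natCast]
  ring

end FourierSeries

theorem travWave_eq (α p : ℂ) (ω c t : ℝ) :
    travWave α p ω c t = fun x => α * Complex.exp (-(ω * t) * Complex.I) *
      (1 - p * Complex.exp (-(c * t) * Complex.I) * toCircle x)⁻¹ := by
  ext x
  have hshift : circlePt (x - ((c * t : ℝ) : AddCircle (2 * π)))
      = Complex.exp (-(c * t) * Complex.I) * toCircle x := by
    rw [circlePt, sub_eq_add_neg, toCircle_add, ← AddCircle.coe_neg, toCircle_apply_mk,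
      div_self two_pi_pos.ne', one_mul, Circle.coe_mul, Circle.coe_exp, mul_comm]
    push_cast
    rfl
  have hphase : -Complex.I * ω * t = -(ω * t) * Complex.I := by ring
  rw [travWave, hshift, hphase, ← mul_assoc, div_eq_mul_inv]
  ring

theorem norm_mul_exp_ofReal_mul_I (p : ℂ) (s : ℝ) : ‖p * Complex.exp (s * Complex.I)‖ = ‖p‖ := by
  rw [norm_mul, Complex.norm_exp_ofReal_mul_I, mul_one]

theorem fourierCoeff_travWave {p : ℂ} (hp : ‖p‖ < 1) (α : ℂ) (ω c t : ℝ) :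
    fourierCoeff (travWave α p ω c t) =
      Int.rec (fun k => α * p ^ k * Complex.exp (-Complex.I * (ω + c * k) * t)) 0 := by
  have hq := norm_mul_exp_ofReal_mul_I p (-(c * t))
  push_cast at hq
  ext n
  rw [travWave_eq, fourierCoeff.const_mul, fourierCoeff_inv_one_sub_mul_toCircle (hq ▸ hp)]
  rcases n with k | k
  · have hphase : Complex.exp (-(ω * t) * Complex.I) * Complex.exp (-(c * t) * Complex.I) ^ k
        = Complex.exp (-Complex.I * (ω + c * k) * t) := by
      rw [← Complex.exp_nat_mul, ← Complex.exp_add]; ring_nf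
    linear_combination (α * p ^ k) * hphase
  · exact mul_zero _

theorem fourierCoeff_sq_norm_mul_travWave {p : ℂ} (hp : ‖p‖ < 1) (α : ℂ) (ω c t : ℝ) (k : ℕ) :
    fourierCoeff (fun x => (‖travWave α p ω c t x‖ ^ 2 : ℂ) * travWave α p ω c t x) k
      = ‖α‖ ^ 2 * ((‖p‖ : ℂ) ^ 2 / (1 - (‖p‖ : ℂ) ^ 2) ^ 2 + (k + 1) / (1 - (‖p‖ : ℂ) ^ 2))
        * fourierCoeff (travWave α p ω c t) k := by
  have hq := norm_mul_exp_ofReal_mul_I p (-(c * t))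
  have hβ := norm_mul_exp_ofReal_mul_I α (-(ω * t))
  push_cast at hq hβ
  rw [travWave_eq, fourierCoeff_sq_norm_mul_self_mul_inv_one_sub (hq ▸ hp), hq, hβ,
    fourierCoeff.const_mul, fourierCoeff_inv_one_sub_mul_toCircle (hq ▸ hp)]
  simp only [Int.rec_natCast]

/-- For `u₀(z) = α/(1−pz)`, `|p| < 1`, the function
`u(t,z) = e^{−iωt}u₀(e^{−ict}z)` with `ω = |α|²/(1−|p|²)²`, `c = |α|²/(1−|p|²)` is an
exact solution of the cubic Szegő equation `i∂_t u = Π(|u|²u)`: its negative Fourier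
coefficients vanish and for every `n ≥ 0` the coefficient `û(t,n)` satisfies
`∂_t û(n) = −i (|u|²u)^(n)`. -/
theorem stmt17 (α p : ℂ) (hp : ‖p‖ < 1) :
    (∀ t : ℝ, ∀ n : ℤ, n < 0 →
      fourierCoeff (travWave α p (‖α‖ ^ 2 / (1 - ‖p‖ ^ 2) ^ 2) (‖α‖ ^ 2 / (1 - ‖p‖ ^ 2)) t) n
        = 0) ∧
    ∀ t : ℝ, ∀ n : ℤ, 0 ≤ n →
      HasDerivAt
        (fun τ : ℝ => fourierCoeff
          (travWave α p (‖α‖ ^ 2 / (1 - ‖p‖ ^ 2) ^ 2) (‖α‖ ^ 2 / (1 - ‖p‖ ^ 2)) τ) n)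
        (-Complex.I * fourierCoeff
          (fun x => (‖travWave α p (‖α‖ ^ 2 / (1 - ‖p‖ ^ 2) ^ 2)
              (‖α‖ ^ 2 / (1 - ‖p‖ ^ 2)) t x‖ ^ 2 : ℂ) *
            travWave α p (‖α‖ ^ 2 / (1 - ‖p‖ ^ 2) ^ 2) (‖α‖ ^ 2 / (1 - ‖p‖ ^ 2)) t x) n)
        t := by
  refine ⟨fun t n hn => ?_, fun t n hn => ?_⟩
  · obtain ⟨k, rfl⟩ := Int.eq_negSucc_of_lt_zero hn
    rw [fourierCoeff_travWave hp]
    rfl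
  · lift n to ℕ using hn
    have hr : (1 : ℂ) - (‖p‖ : ℂ) ^ 2 ≠ 0 := by
      norm_cast; nlinarith [norm_nonneg p]
    have hrate : (‖α‖ : ℂ) ^ 2 * ((‖p‖ : ℂ) ^ 2 / (1 - (‖p‖ : ℂ) ^ 2) ^ 2
        + (n + 1) / (1 - (‖p‖ : ℂ) ^ 2))
        = ((‖α‖ ^ 2 / (1 - ‖p‖ ^ 2) ^ 2 : ℝ) : ℂ) + ((‖α‖ ^ 2 / (1 - ‖p‖ ^ 2) : ℝ) : ℂ) * n := by
      push_cast
      field_simp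
      ring
    simp only [fourierCoeff_sq_norm_mul_travWave hp, fourierCoeff_travWave hp, Int.rec_natCast,
      hrate]
    set a : ℂ := -Complex.I * (((‖α‖ ^ 2 / (1 - ‖p‖ ^ 2) ^ 2 : ℝ) : ℂ)
      + ((‖α‖ ^ 2 / (1 - ‖p‖ ^ 2) : ℝ) : ℂ) * n)
    have hexp : HasDerivAt (fun τ : ℝ => Complex.exp (a * τ)) (Complex.exp (a * t) * a) t := by
      simpa using ((hasDerivAt_id (t : ℂ)).const_mul a).cexp.comp_ofReal
    exact (hexp.const_mul (α * p ^ n)).congr_deriv (by ring)
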